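/- arXiv:1907.07795 — 3 statements merged into one kernel-verified Lean document; each statement's English description precedes it below -/
import Mathlib

section
/- Let a be even with 0 < a < b and b odd. Then (a | b) = (-1)^(a(b-1)/4) · (a | b - a). -/
/-!
Write `b = a + c` with `c = b - a` odd. Since `a ≡ -c (mod b)` and `b ≡ a (mod c)`, the
supplementary law for `-1` and quadratic reciprocity give
`(a | b) = (-1 | b) (c | b) = ± (b | c) = ± (a | c)`; writing `a = 2x`, `c = 2y + 1`, the
total sign is `(-1)^((x + y)(y + 1))`, which agrees with `(-1)^(x(x + y)) = (-1)^(a(b - 1)/4)`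
because `(x + y)(x + y + 1)` is even.
-/

theorem jacobiSym_add_right_eq_neg_one_pow_mul {a c : ℕ} (hc : Odd c) (hb : Odd (a + c)) :
    jacobiSym (a : ℤ) (a + c) = (-1) ^ ((a + c) / 2 * (c / 2 + 1)) * jacobiSym (a : ℤ) c := by
  have hneg : jacobiSym (a : ℤ) (a + c) = jacobiSym (-(c : ℤ)) (a + c) :=
    jacobiSym.mod_left' (by push_cast; simp [← Int.sub_emod_left])
  have hmod : jacobiSym ((a + c : ℕ) : ℤ) c = jacobiSym (a : ℤ) c :=
    jacobiSym.mod_left' (by push_cast; simp)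
  rw [hneg, jacobiSym.neg _ hb, ZMod.χ₄_eq_neg_one_pow (Nat.odd_iff.mp hb),
    jacobiSym.quadratic_reciprocity hc hb, hmod]
  ring

theorem neg_one_pow_add_div_two_mul_eq {a c : ℕ} (ha : Even a) (hc : Odd c) :
    (-1 : ℤ) ^ ((a + c) / 2 * (c / 2 + 1)) = (-1) ^ (a * (a + c - 1) / 4) := by
  obtain ⟨x, rfl⟩ := ha
  obtain ⟨y, rfl⟩ := hc
  have hsum : (x + x + (2 * y + 1)) / 2 = x + y := by omega
  have hy : (2 * y + 1) / 2 + 1 = y + 1 := by omega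
  have hquarter : (x + x) * (x + x + (2 * y + 1) - 1) / 4 = x * (x + y) := by
    rw [show x + x + (2 * y + 1) - 1 = 2 * (x + y) by omega]
    rw [show (x + x) * (2 * (x + y)) = 4 * (x * (x + y)) by ring]
    omega
  rw [hsum, hy, hquarter]
  apply neg_one_pow_congr
  simp only [Nat.even_mul, Nat.even_add, Nat.even_add_one]
  tauto

theorem jacobi_single_even_reduction_general (a b : ℕ) (ha : Even a)
    (hab : a < b) (hb : Odd b) :
    jacobiSym (a : ℤ) b = (-1) ^ (a * (b - 1) / 4) * jacobiSym (a : ℤ) (b - a) := by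
  obtain ⟨c, rfl⟩ := Nat.exists_eq_add_of_le hab.le
  have hc : Odd c := (Nat.odd_add'.mp hb).mpr ha
  rw [Nat.add_sub_cancel_left, ← neg_one_pow_add_div_two_mul_eq ha hc]
  exact jacobiSym_add_right_eq_neg_one_pow_mul hc hb

theorem jacobi_single_even_reduction (a b : ℕ) (ha : Even a) (hapos : 0 < a)
    (hab : a < b) (hb : Odd b) :
    jacobiSym (a : ℤ) b = (-1) ^ (a * (b - 1) / 4) * jacobiSym (a : ℤ) (b - a) :=
  jacobi_single_even_reduction_general a b ha hab hb
end

section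
/- Let a ≡ 2 (mod 4), a > 0, b odd positive, and 1 ≤ m ≤ ⌊b/a⌋. Then (a | b) = (-1)^(m(b-1)/2 + m(m-1)/2) · (a | b - m·a). -/
/-!
Write `a = 2c` with `c` odd. Quadratic reciprocity gives `J(a | n) = J(2χ₄(c) | n) · J(n | c)`
for odd `n`; the second factor only sees `n mod c`, and the first is a character mod 8 with
`J(2χ₄(c) | n) = χ₄(n) · J(2χ₄(c) | n - a)`. So each subtraction of `a` from `n` costs `χ₄(n)`,
and `χ₄(b - ia) = (-1)^((b-1)/2 + i)`; summing over `i < m` gives the exponent.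
-/

open ZMod NumberTheorySymbols

theorem neg_one_pow_div_two_sub_mul {a b m : ℕ} (ha : a % 4 = 2) (hmb : m * a ≤ b) :
    (-1 : ℤ) ^ ((b - m * a) / 2) = (-1) ^ (b / 2 + m) := by
  obtain ⟨c, rfl⟩ : ∃ c, a = 2 * c := ⟨a / 2, by omega⟩
  have hc : Even (c + 1) := Nat.even_iff.mpr (by omega)
  rw [mul_left_comm] at hmb ⊢
  have : b / 2 + m = (b - 2 * (m * c)) / 2 + m * (c + 1) := by rw [mul_add]; omega
  rw [this, pow_add, (hc.mul_left m).neg_one_pow, mul_one]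

namespace jacobiSym

theorem two_mul_left_of_odd {c n : ℕ} (hc : Odd c) (hn : Odd n) :
    J(2 * c | n) = J(2 * χ₄ c | n) * J(n | c) := by
  rw [mul_left, quadratic_reciprocity' hc hn, qrSign.symm hn hc, qrSign, ← mul_assoc,
    ← mul_left]

theorem two_mul_χ₄_left_eq_mul_sub {b c : ℕ} (hb : Odd b) (hc : Odd c) (hcb : 2 * c ≤ b) :
    J(2 * χ₄ c | b) = χ₄ b * J(2 * χ₄ c | b - 2 * c) := by
  have hb8 : b % 8 = 1 ∨ b % 8 = 3 ∨ b % 8 = 5 ∨ b % 8 = 7 := by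
    have := Nat.odd_iff.mp hb; omega
  have hb4 : b % 4 = b % 8 % 4 := by omega
  have hsub : (b - 2 * c) % 8 = (b % 8 + 8 - 2 * (c % 4)) % 8 := by omega
  -- `J(±2 | n)` and `J(-1 | n)` only depend on `n mod 8`: a check of eight cases.
  rw [← at_neg_one hb, mod_right (-1) hb, mod_right _ hb,
    mod_right _ (Nat.Odd.sub_even hcb hb (even_two_mul c))]
  rcases Nat.odd_mod_four_iff.mp (Nat.odd_iff.mp hc) with hc4 | hc4 <;>
    [rw [χ₄_nat_one_mod_four hc4]; rw [χ₄_nat_three_mod_four hc4]] <;>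
    rcases hb8 with h8 | h8 | h8 | h8 <;>
    norm_num <;> simp only [hsub, hc4, h8, hb4] <;> norm_num

theorem eq_χ₄_mul_sub_of_mod_four_eq_two {a b : ℕ} (ha : a % 4 = 2) (hb : Odd b)
    (hab : a ≤ b) : J(a | b) = χ₄ b * J(a | b - a) := by
  obtain ⟨c, rfl⟩ : ∃ c, a = 2 * c := ⟨a / 2, by omega⟩
  have hc : Odd c := Nat.odd_iff.mpr (by omega)
  have hb' : Odd (b - 2 * c) := Nat.Odd.sub_even hab hb (even_two_mul c)
  have hmod : J(((b - 2 * c : ℕ) : ℤ) | c) = J(b | c) :=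
    mod_left' (by push_cast [Nat.cast_sub hab]; simp [Int.sub_emod])
  rw [Nat.cast_mul, Nat.cast_two, two_mul_left_of_odd hc hb, two_mul_left_of_odd hc hb', hmod,
    two_mul_χ₄_left_eq_mul_sub hb hc hab, mul_assoc]

theorem eq_neg_one_pow_mul_sub_mul {a b m : ℕ} (ha : a % 4 = 2) (hb : Odd b)
    (hmb : m * a ≤ b) : J(a | b) = (-1) ^ (m * (b / 2) + m.choose 2) * J(a | b - m * a) := by
  induction m with
  | zero => simp
  | succ m ih =>
    rw [add_one_mul] at hmb
    have hb' : Odd (b - m * a) :=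
      Nat.Odd.sub_even (by omega) hb ((Nat.even_iff.mpr (by omega)).mul_left m)
    rw [ih (by omega), eq_χ₄_mul_sub_of_mod_four_eq_two ha hb' (by omega),
      χ₄_eq_neg_one_pow (Nat.odd_iff.mp hb'), neg_one_pow_div_two_sub_mul ha (by omega),
      Nat.sub_sub, ← add_one_mul, Nat.choose_succ_succ', Nat.choose_one_right, ← mul_assoc,
      ← pow_add]
    ring_nf

end jacobiSym

theorem jacobi_reduction_two_mod_four_general (a b m : ℕ) (ha : a % 4 = 2)
    (hb : Odd b) (hm' : m ≤ b / a) :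
    jacobiSym (a : ℤ) b =
      (-1) ^ (m * (b - 1) / 2 + m * (m - 1) / 2) * jacobiSym (a : ℤ) (b - m * a) := by
  have hb2 : b - 1 = 2 * (b / 2) := by have := Nat.odd_iff.mp hb; omega
  rw [hb2, mul_left_comm, Nat.mul_div_cancel_left _ two_pos, ← Nat.choose_two_right]
  exact jacobiSym.eq_neg_one_pow_mul_sub_mul ha hb ((Nat.le_div_iff_mul_le (by omega)).mp hm')

theorem jacobi_reduction_two_mod_four (a b m : ℕ) (ha : a % 4 = 2) (hapos : 0 < a)
    (hb : Odd b) (hbpos : 0 < b) (hm : 1 ≤ m) (hm' : m ≤ b / a) :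
    jacobiSym (a : ℤ) b =
      (-1) ^ (m * (b - 1) / 2 + m * (m - 1) / 2) * jacobiSym (a : ℤ) (b - m * a) :=
  jacobi_reduction_two_mod_four_general a b m ha hb hm'
end

section
/- For any positive integers a, b with b odd, there exists a finite sequence of reductions of the form (a, b) → (a - m·b, b) or (a, b) → (a, b - m·a) with 1 ≤ m ≤ the corresponding true quotient, after which one of the entries is 0, and the Jacobi symbol (a | b) equals [g = 1] times a product of signs each determined by the residues modulo 4 of the current pair and of m, where g is the remaining nonzero entry. -/
/-!
Along a run from `(a, b)` with `b` odd one entry always stays odd, so `jacobiPair x y`, which is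
`J(x | y)` when `y` is odd and `J(y | x)` otherwise, starts at `J(a | b)` and ends at
`J(0 | g) = [g = 1]`. Each reduction multiplies it by a sign read off residues mod 4. Reducing the
numerator modulo an odd denominator is free. Reciprocity (`recipSign`) is paid whenever an odd
entry enters or leaves the denominator. Shifting an odd denominator by a multiple of an even
numerator `x` costs `evenSign`: nothing when `4 ∣ x`, because `J(4v | ·) = J(v | ·)` has period
`4v`; when `x = 2u` with `u` odd, `J(2 | ·) = χ₈` together with reciprocity for `u` gives a sign
that is checked over all residues mod 8.
-/

namespace LeftToRightJacobi

open ZMod Finset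
open scoped NumberTheorySymbols

def recipSign (x y : ZMod 4) : ℤ := if x = 3 ∧ y = 3 then -1 else 1

def evenSign (x y m : ZMod 4) : ℤ :=
  if x = 2 ∧ (m = 2 ∨ (m = 1 ∧ y = 3) ∨ (m = 3 ∧ y = 1)) then -1 else 1

def reduceFstSign (x y m : ZMod 4) : ℤ := evenSign y x m

def reduceSndSign (x y m : ZMod 4) : ℤ :=
  evenSign x y m * recipSign x y * recipSign x (y - m * x)

lemma natCast_eq_two_iff (n : ℕ) : (n : ZMod 4) = 2 ↔ n % 4 = 2 := by
  simpa using ZMod.natCast_eq_natCast_iff' n 2 4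

lemma natCast_eq_three_iff (n : ℕ) : (n : ZMod 4) = 3 ↔ n % 4 = 3 := by
  simpa using ZMod.natCast_eq_natCast_iff' n 3 4

lemma recipSign_natCast (x y : ℕ) :
    recipSign x y = if x % 4 = 3 ∧ y % 4 = 3 then -1 else 1 := by
  simp only [recipSign, natCast_eq_three_iff]

lemma recipSign_of_even_left {x : ℕ} (hx : Even x) (y : ZMod 4) : recipSign x y = 1 :=
  if_neg fun h => by have := (natCast_eq_three_iff x).1 h.1; grind

lemma recipSign_of_even_right (x : ZMod 4) {y : ℕ} (hy : Even y) : recipSign x y = 1 :=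
  if_neg fun h => by have := (natCast_eq_three_iff y).1 h.2; grind

lemma recipSign_mul_self (x y : ZMod 4) : recipSign x y * recipSign x y = 1 := by
  unfold recipSign; split_ifs <;> norm_num

lemma evenSign_of_ne_two {x : ZMod 4} (hx : x ≠ 2) (y m : ZMod 4) : evenSign x y m = 1 :=
  if_neg fun h => hx h.1

lemma natCast_ne_two_of_odd {x : ℕ} (hx : Odd x) : (x : ZMod 4) ≠ 2 := by
  rw [Ne, natCast_eq_two_iff]; grind

lemma chi8_mul_recipSign_mul_recipSign {y u : ℕ} (hu : Odd u) (m : ℕ) :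
    χ₈ ↑(y + m * (2 * u)) * recipSign u ↑(y + m * (2 * u)) * recipSign u y =
      evenSign ↑(2 * u) ↑(y + m * (2 * u)) m * χ₈ y := by
  have table : ∀ y u m : ZMod 8, u.val % 2 = 1 →
      χ₈ (y + m * (2 * u)) * recipSign (cast u) (cast (y + m * (2 * u))) *
          recipSign (cast u) (cast y) =
        evenSign (cast (2 * u)) (cast (y + m * (2 * u))) (cast m) * χ₈ y := by
    decide
  have hu8 : (u : ZMod 8).val % 2 = 1 := by rw [ZMod.val_natCast]; grind
  have := table y u m hu8
  norm_cast at this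
  simpa only [ZMod.cast_natCast (show 4 ∣ 8 by norm_num)] using this

def jacobiPair (x y : ℕ) : ℤ := if Odd y then J(x | y) else J(y | x)

lemma jacobiPair_of_odd_left {x : ℕ} (hx : Odd x) (y : ℕ) :
    jacobiPair x y = recipSign x y * J(y | x) := by
  rcases Nat.even_or_odd y with hy | hy
  · rw [jacobiPair, if_neg (Nat.not_odd_iff_even.2 hy), recipSign_of_even_right _ hy, one_mul]
  · rw [jacobiPair, if_pos hy, recipSign_natCast,
      ← jacobiSym.quadratic_reciprocity_if (Nat.odd_iff.1 hx) (Nat.odd_iff.1 hy)]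
    split_ifs <;> ring

lemma jacobiPair_add_mul_right_of_odd {x : ℕ} (hx : Odd x) (y m : ℕ) :
    jacobiPair x (y + m * x) = recipSign x ↑(y + m * x) * recipSign x y * jacobiPair x y := by
  have hmod : J(↑(y + m * x) | x) = J(y | x) :=
    jacobiSym.mod_left' (by push_cast; exact Int.add_mul_emod_self_right _ _ _)
  rw [jacobiPair_of_odd_left hx, jacobiPair_of_odd_left hx, hmod, mul_assoc,
    ← mul_assoc _ _ J(_ | _), recipSign_mul_self, one_mul]

lemma jacobiSym_add_mul_of_even {x : ℕ} (hx : Even x) {y : ℕ} (hy : Odd y) (m : ℕ) :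
    J(x | y + m * x) = evenSign x ↑(y + m * x) m * J(x | y) := by
  have hY : Odd (y + m * x) := hy.add_even (hx.mul_left m)
  obtain ⟨u, rfl⟩ := hx.two_dvd
  rcases Nat.even_or_odd u with hu | hu
  · obtain ⟨v, rfl⟩ := hu.two_dvd
    rw [show 2 * (2 * v) = 4 * v by ring] at hY ⊢
    have h4 : ∀ b : ℕ, Odd b → J(↑(4 * v) | b) = J(v | b % (4 * v)) := fun b hb => by
      rw [Nat.cast_mul, jacobiSym.mul_left, Nat.cast_ofNat, jacobiSym.at_four hb, one_mul,
        jacobiSym.mod_right' v hb]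
    have hne : ((4 * v : ℕ) : ZMod 4) ≠ 2 := by rw [Ne, natCast_eq_two_iff]; omega
    rw [h4 _ hY, h4 _ hy, evenSign_of_ne_two hne, one_mul, Nat.add_mul_mod_self_right]
  · have h2 : ∀ b : ℕ, Odd b → J(↑(2 * u) | b) = χ₈ b * jacobiPair u b := fun b hb => by
      rw [Nat.cast_mul, jacobiSym.mul_left, Nat.cast_ofNat, jacobiSym.at_two hb, jacobiPair,
        if_pos hb]
    have hshift := jacobiPair_add_mul_right_of_odd hu y (m * 2)
    rw [mul_assoc] at hshift
    rw [h2 _ hY, h2 _ hy, hshift, ← mul_assoc, ← mul_assoc, chi8_mul_recipSign_mul_recipSign hu,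
      mul_assoc]

lemma odd_add_mul_or_odd_iff (x y m : ℕ) : Odd (x + m * y) ∨ Odd y ↔ Odd x ∨ Odd y := by
  rcases Nat.even_or_odd y with hy | hy
  · simp [Nat.odd_add, hy, Nat.not_odd_iff_even.2 hy]
  · simp [hy]

lemma jacobiPair_add_mul_left {x y : ℕ} (h : Odd x ∨ Odd y) (m : ℕ) :
    jacobiPair (x + m * y) y = reduceFstSign ↑(x + m * y) y m * jacobiPair x y := by
  rcases Nat.even_or_odd y with hy | hy
  · have hx := h.resolve_right (Nat.not_odd_iff_even.2 hy)
    rw [jacobiPair, jacobiPair, if_neg (Nat.not_odd_iff_even.2 hy),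
      if_neg (Nat.not_odd_iff_even.2 hy), reduceFstSign, jacobiSym_add_mul_of_even hy hx]
  · rw [jacobiPair, jacobiPair, if_pos hy, if_pos hy, reduceFstSign,
      evenSign_of_ne_two (natCast_ne_two_of_odd hy), one_mul]
    exact jacobiSym.mod_left' (by push_cast; exact Int.add_mul_emod_self_right _ _ _)

lemma jacobiPair_add_mul_right {x y : ℕ} (h : Odd x ∨ Odd y) (m : ℕ) :
    jacobiPair x (y + m * x) = reduceSndSign x ↑(y + m * x) m * jacobiPair x y := by
  have hYy : ((y + m * x : ℕ) : ZMod 4) - m * x = y := by push_cast; ring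
  rcases Nat.even_or_odd x with hx | hx
  · have hy := h.resolve_left (Nat.not_odd_iff_even.2 hx)
    have hY : Odd (y + m * x) := hy.add_even (hx.mul_left m)
    rw [jacobiPair, jacobiPair, if_pos hY, if_pos hy, reduceSndSign, recipSign_of_even_left hx,
      recipSign_of_even_left hx, mul_one, mul_one, jacobiSym_add_mul_of_even hx hy]
  · rw [jacobiPair_add_mul_right_of_odd hx, reduceSndSign, hYy,
      evenSign_of_ne_two (natCast_ne_two_of_odd hx), one_mul]

def ReductionStep (p q : ℕ × ℕ) (m : ℕ) : Prop :=
  (p.2 ≤ p.1 ∧ 1 ≤ m ∧ m ≤ p.1 / p.2 ∧ q = (p.1 - m * p.2, p.2)) ∨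
    (p.1 < p.2 ∧ 1 ≤ m ∧ m ≤ p.2 / p.1 ∧ q = (p.1, p.2 - m * p.1))

def stepSign (p : ℕ × ℕ) (m : ℕ) : ℤ :=
  if p.2 ≤ p.1 then reduceFstSign p.1 p.2 m else reduceSndSign p.1 p.2 m

namespace ReductionStep

variable {p q : ℕ × ℕ} {m : ℕ}

lemma odd_or_odd (h : ReductionStep p q m) (hp : Odd p.1 ∨ Odd p.2) : Odd q.1 ∨ Odd q.2 := by
  obtain ⟨x, y⟩ := p
  rcases h with ⟨-, -, hm, rfl⟩ | ⟨-, -, hm, rfl⟩ <;> dsimp only at hm hp ⊢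
  · obtain ⟨x, rfl⟩ := Nat.exists_eq_add_of_le' (Nat.mul_le_of_le_div _ _ _ hm)
    rw [Nat.add_sub_cancel]
    exact (odd_add_mul_or_odd_iff x y m).1 hp
  · obtain ⟨y, rfl⟩ := Nat.exists_eq_add_of_le' (Nat.mul_le_of_le_div _ _ _ hm)
    rw [Nat.add_sub_cancel]
    exact or_comm.1 ((odd_add_mul_or_odd_iff y x m).1 hp.symm)

lemma jacobiPair_eq (h : ReductionStep p q m) (hp : Odd p.1 ∨ Odd p.2) :
    jacobiPair p.1 p.2 = stepSign p m * jacobiPair q.1 q.2 := by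
  obtain ⟨x, y⟩ := p
  rcases h with ⟨hle, -, hm, rfl⟩ | ⟨hlt, -, hm, rfl⟩ <;> dsimp only at *
  · obtain ⟨x, rfl⟩ := Nat.exists_eq_add_of_le' (Nat.mul_le_of_le_div _ _ _ hm)
    rw [stepSign, if_pos hle]
    simpa [Nat.add_sub_cancel] using
      jacobiPair_add_mul_left ((odd_add_mul_or_odd_iff x y m).1 hp) m
  · obtain ⟨y, rfl⟩ := Nat.exists_eq_add_of_le' (Nat.mul_le_of_le_div _ _ _ hm)
    rw [stepSign, if_neg (not_le.2 hlt)]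
    simpa [Nat.add_sub_cancel] using
      jacobiPair_add_mul_right (or_comm.1 ((odd_add_mul_or_odd_iff y x m).1 hp.symm)) m

end ReductionStep

lemma jacobiPair_run {n : ℕ} {f : ℕ → ℕ × ℕ} {m : ℕ → ℕ}
    (hrun : ∀ k < n, ReductionStep (f k) (f (k + 1)) (m k)) (h0 : Odd (f 0).1 ∨ Odd (f 0).2) :
    (Odd (f n).1 ∨ Odd (f n).2) ∧
      jacobiPair (f 0).1 (f 0).2 =
        jacobiPair (f n).1 (f n).2 * ∏ k ∈ range n, stepSign (f k) (m k) := by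
  induction n with
  | zero => simp [h0]
  | succ n ih =>
    obtain ⟨hodd, heq⟩ := ih fun k hk => hrun k (by omega)
    have hstep := hrun n (by omega)
    refine ⟨hstep.odd_or_odd hodd, ?_⟩
    rw [heq, hstep.jacobiPair_eq hodd, prod_range_succ]
    ring

lemma exists_reductionStep {x y : ℕ} (hx : 0 < x) (hy : 0 < y) :
    ∃ q, ReductionStep (x, y) q 1 ∧ q.1 + q.2 < x + y := by
  rcases le_or_gt y x with hle | hlt
  · refine ⟨_, Or.inl ⟨hle, le_rfl, (Nat.one_le_div_iff hy).2 hle, rfl⟩, ?_⟩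
    dsimp only; omega
  · refine ⟨_, Or.inr ⟨hlt, le_rfl, (Nat.one_le_div_iff hx).2 hlt.le, rfl⟩, ?_⟩
    dsimp only; omega

lemma exists_run (p : ℕ × ℕ) :
    ∃ (n : ℕ) (f : ℕ → ℕ × ℕ) (m : ℕ → ℕ), f 0 = p ∧
      (∀ k < n, ReductionStep (f k) (f (k + 1)) (m k)) ∧ ((f n).1 = 0 ∨ (f n).2 = 0) := by
  induction hp : p.1 + p.2 using Nat.strong_induction_on generalizing p with
  | _ N ih =>
    obtain ⟨x, y⟩ := p
    by_cases hxy : x = 0 ∨ y = 0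
    · exact ⟨0, fun _ => (x, y), fun _ => 1, rfl, by simp, hxy⟩
    rw [not_or] at hxy
    obtain ⟨q, hstep, hlt⟩ :=
      exists_reductionStep (Nat.pos_of_ne_zero hxy.1) (Nat.pos_of_ne_zero hxy.2)
    obtain ⟨n, f, m, hf0, hrun, hend⟩ := ih _ (hp ▸ hlt) q rfl
    refine ⟨n + 1, fun | 0 => (x, y) | k + 1 => f k, fun | 0 => 1 | k + 1 => m k, rfl, ?_, hend⟩
    rintro (_ | k) hk
    · simpa [hf0] using hstep
    · exact hrun k (by omega)

lemma jacobiSym_zero_left_eq_ite {g : ℕ} (hg : g ≠ 0) : J(0 | g) = if g = 1 then 1 else 0 := by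
  split_ifs with h
  · rw [h, jacobiSym.one_right]
  · exact jacobiSym.zero_left (by omega)

end LeftToRightJacobi

open LeftToRightJacobi

theorem left_to_right_jacobi_correct :
    ∃ σa σb : ZMod 4 → ZMod 4 → ZMod 4 → ℤ,
      ∀ a b : ℕ, 0 < a → 0 < b → Odd b →
        ∃ (n : ℕ) (f : ℕ → ℕ × ℕ) (m : ℕ → ℕ) (s : ℕ → ℤ),
          f 0 = (a, b) ∧
          (∀ k < n,
            ((f k).2 ≤ (f k).1 ∧ 1 ≤ m k ∧ m k ≤ (f k).1 / (f k).2 ∧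
              f (k + 1) = ((f k).1 - m k * (f k).2, (f k).2) ∧
              s k = σa ((f k).1 : ZMod 4) ((f k).2 : ZMod 4) (m k : ZMod 4)) ∨
            ((f k).1 < (f k).2 ∧ 1 ≤ m k ∧ m k ≤ (f k).2 / (f k).1 ∧
              f (k + 1) = ((f k).1, (f k).2 - m k * (f k).1) ∧
              s k = σb ((f k).1 : ZMod 4) ((f k).2 : ZMod 4) (m k : ZMod 4))) ∧
          (((f n).1 = 0 ∧
              jacobiSym (a : ℤ) b =
                (if (f n).2 = 1 then 1 else 0) * ∏ k ∈ Finset.range n, s k) ∨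
           ((f n).2 = 0 ∧
              jacobiSym (a : ℤ) b =
                (if (f n).1 = 1 then 1 else 0) * ∏ k ∈ Finset.range n, s k)) := by
  refine ⟨reduceFstSign, reduceSndSign, fun a b _ _ hb => ?_⟩
  obtain ⟨n, f, m, hf0, hrun, hend⟩ := exists_run (a, b)
  obtain ⟨hodd, htel⟩ := jacobiPair_run hrun (by rw [hf0]; exact Or.inr hb)
  rw [hf0, jacobiPair, if_pos hb] at htel
  refine ⟨n, f, m, fun k => stepSign (f k) (m k), hf0, fun k hk => ?_, ?_⟩
  · rcases hrun k hk with ⟨hle, h⟩ | ⟨hlt, h⟩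
    · exact Or.inl ⟨hle, h.1, h.2.1, h.2.2, if_pos hle⟩
    · exact Or.inr ⟨hlt, h.1, h.2.1, h.2.2, if_neg (not_le.2 hlt)⟩
  · rcases hend with h | h
    · have hg : Odd (f n).2 := hodd.resolve_left (by simp [h])
      refine Or.inl ⟨h, ?_⟩
      rw [htel, h, jacobiPair, if_pos hg, Nat.cast_zero,
        jacobiSym_zero_left_eq_ite hg.pos.ne']
    · have hg : Odd (f n).1 := hodd.resolve_right (by simp [h])
      refine Or.inr ⟨h, ?_⟩
      rw [htel, h, jacobiPair, if_neg (by simp), Nat.cast_zero,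
        jacobiSym_zero_left_eq_ite hg.pos.ne']
end
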